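/- Let H be a separable infinite-dimensional complex Hilbert space, let E be a complex inner product space of finite dimension N ≥ 1, and let (ψ_n, φ_n)_{n ∈ ℕ} (with ψ_n ∈ H, φ_n ∈ E) be an orthonormal (Hilbert) basis of H × E with the product inner product. Let Θ ⊆ ℕ be a finite set of cardinality N. If the family (φ_n)_{n ∈ Θ} is linearly independent in E, then (ψ_n)_{n ∈ ℕ∖Θ} is a Riesz basis for H, i.e., there exist an orthonormal basis (u_n)_{n ∈ ℕ∖Θ} of H and a continuous linear equivalence S : H → H with S u_n = ψ_n for every n ∈ ℕ∖Θ. -/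

import Mathlib

/-! Write `b n = (ψ n, φ n)` for the given Hilbert basis of `H × E` and let `K` be the orthogonal
complement of the span of the `b n`, `n ∈ Θ`; the `b n` with `n ∉ Θ` form a Hilbert basis of `K`.
The first projection `K → H` is injective, since a vector `(0, y)` of `K` is orthogonal to the
basis `(φ n)_{n ∈ Θ}` of `E`, and surjective, since for every `x` the `N` equations
`⟪φ n, y⟫ = -⟪ψ n, x⟫`, `n ∈ Θ`, have a solution `y`. By the open mapping theorem it is a
continuous linear equivalence, and it sends `b n` to `ψ n`. Finally `H`, being separable and
infinite-dimensional, has a Hilbert basis indexed by the countably infinite set `ℕ ∖ Θ`; the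
isometry `H ≃ K` matching it with `(b n)_{n ∉ Θ}`, followed by the projection, is `S`. -/

open scoped InnerProductSpace

open Submodule Module InnerProductSpace

section Orthogonal

variable {ι 𝕜 E : Type*} [RCLike 𝕜] [NormedAddCommGroup E] [InnerProductSpace 𝕜 E]

theorem Submodule.mem_orthogonal_span_iff {s : Set E} {x : E} :
    x ∈ (span 𝕜 s)ᗮ ↔ ∀ u ∈ s, ⟪u, x⟫_𝕜 = 0 := by
  rw [← span_singleton_le_iff_mem, ← isOrtho_iff_le, isOrtho_comm, isOrtho_span]
  simp

theorem HilbertBasis.eq_zero_of_forall_inner_eq_zero (b : HilbertBasis ι 𝕜 E) {x : E}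
    (hx : ∀ i, ⟪b i, x⟫_𝕜 = 0) : x = 0 := by
  apply b.repr.injective
  ext i
  simp [b.repr_apply_apply, hx]

theorem HilbertBasis.apply_mem_orthogonal_span_restrict (b : HilbertBasis ι 𝕜 E) (s : Set ι)
    (i : {i // i ∉ s}) : b i ∈ (span 𝕜 (Set.range fun j : s => b j))ᗮ := by
  rw [mem_orthogonal_span_iff]
  rintro _ ⟨j, rfl⟩
  exact b.orthonormal.inner_eq_zero (ne_of_mem_of_not_mem j.2 i.2)

theorem HilbertBasis.repr_trans_repr_symm_apply {F : Type*} [NormedAddCommGroup F]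
    [InnerProductSpace 𝕜 F] (b : HilbertBasis ι 𝕜 E) (b' : HilbertBasis ι 𝕜 F) (i : ι) :
    b.repr.trans b'.repr.symm (b i) = b' i := by
  classical
  simp [HilbertBasis.repr_self]

variable [CompleteSpace E]

noncomputable def HilbertBasis.orthogonalSpanRestrict (b : HilbertBasis ι 𝕜 E) (s : Set ι) :
    HilbertBasis {i // i ∉ s} 𝕜 (span 𝕜 (Set.range fun j : s => b j))ᗮ :=
  .mkOfOrthogonalEqBot ((b.orthonormal.comp _ Subtype.val_injective).codRestrict _
    (b.apply_mem_orthogonal_span_restrict s)) <| by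
    rw [eq_bot_iff]
    rintro ⟨x, hxK⟩ hx
    rw [mem_orthogonal_span_iff] at hx hxK
    rw [mem_bot, mk_eq_zero]
    refine b.eq_zero_of_forall_inner_eq_zero fun i => ?_
    by_cases hi : i ∈ s
    · exact hxK _ ⟨⟨i, hi⟩, rfl⟩
    · exact hx ⟨b i, b.apply_mem_orthogonal_span_restrict s ⟨i, hi⟩⟩ ⟨⟨i, hi⟩, rfl⟩

@[simp]
theorem HilbertBasis.coe_orthogonalSpanRestrict_apply (b : HilbertBasis ι 𝕜 E) (s : Set ι)
    (i : {i // i ∉ s}) : (b.orthogonalSpanRestrict s i : E) = b i := by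
  simp [orthogonalSpanRestrict]

end Orthogonal

section Separable

variable {ι 𝕜 E : Type*} [RCLike 𝕜] [NormedAddCommGroup E] [InnerProductSpace 𝕜 E]

theorem Orthonormal.one_le_dist {v : ι → E} (hv : Orthonormal 𝕜 v) {i j : ι} (hij : i ≠ j) :
    1 ≤ dist (v i) (v j) := by
  have h : dist (v i) (v j) ^ 2 = 2 := by
    rw [dist_eq_norm, @norm_sub_sq 𝕜, hv.norm_eq_one, hv.norm_eq_one, hv.inner_eq_zero hij]
    norm_num
  nlinarith [dist_nonneg (x := v i) (y := v j)]

theorem Orthonormal.countable [TopologicalSpace.SeparableSpace E] {v : ι → E}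
    (hv : Orthonormal 𝕜 v) : Countable ι :=
  Pairwise.countable_of_isOpen_disjoint
    (fun i j hij => Metric.ball_disjoint_ball (by norm_num; exact hv.one_le_dist hij))
    (fun i => Metric.isOpen_ball (x := v i) (ε := 1 / 2))
    fun _ => Metric.nonempty_ball.2 (by norm_num)

theorem HilbertBasis.infinite_of_not_finiteDimensional (b : HilbertBasis ι 𝕜 E)
    (hE : ¬ FiniteDimensional 𝕜 E) : Infinite ι := by
  rw [← not_finite_iff_infinite]
  intro
  have : Fintype ι := Fintype.ofFinite ι
  exact hE (.of_basis b.toOrthonormalBasis.toBasis)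

theorem exists_hilbertBasis_of_countable_of_infinite [CompleteSpace E]
    [TopologicalSpace.SeparableSpace E] (hE : ¬ FiniteDimensional 𝕜 E) (ι : Type*) [Countable ι]
    [Infinite ι] : Nonempty (HilbertBasis ι 𝕜 E) := by
  obtain ⟨w, b, -⟩ := exists_hilbertBasis 𝕜 E
  have := b.orthonormal.countable
  have := b.infinite_of_not_finiteDimensional hE
  obtain ⟨e⟩ := nonempty_equiv_of_countable (α := ι) (β := w)
  refine ⟨.mk (b.orthonormal.comp e e.injective) ?_⟩
  rw [Set.range_comp, e.range_eq_univ, Set.image_univ, b.dense_span]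

end Separable

section Projection

variable {ι 𝕜 H E : Type*} [RCLike 𝕜] [NormedAddCommGroup H] [InnerProductSpace 𝕜 H]
  [NormedAddCommGroup E] [InnerProductSpace 𝕜 E]

theorem Module.Basis.exists_forall_inner_eq [Fintype ι] (c : Basis ι 𝕜 E) (a : ι → 𝕜) :
    ∃ y : E, ∀ i, ⟪c i, y⟫_𝕜 = a i := by
  have : FiniteDimensional 𝕜 E := .of_basis c
  let L : E →ₗ[𝕜] ι → 𝕜 := LinearMap.pi fun i => innerₛₗ 𝕜 (c i)
  have hL : Function.Injective L := fun x y hxy =>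
    ext_inner_left_basis c fun i => congrFun hxy i
  obtain ⟨y, hy⟩ := (LinearMap.injective_iff_surjective_of_finrank_eq_finrank
    (by simp [finrank_eq_card_basis c])).mp hL a
  exact ⟨y, congrFun hy⟩

variable (f : ι → WithLp 2 (H × E)) (c : Basis ι 𝕜 E) (hc : ∀ i, (f i).snd = c i)
include hc

theorem WithLp.fst_injective_on_orthogonal_span :
    Function.Injective fun x : (span 𝕜 (Set.range f))ᗮ => (x : WithLp 2 (H × E)).fst := by
  rintro ⟨x, hx⟩ ⟨y, hy⟩ hxy
  rw [mem_orthogonal_span_iff] at hx hy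
  refine Subtype.ext (WithLp.ofLp_injective 2 (Prod.ext hxy ?_))
  refine ext_inner_left_basis c fun i => ?_
  have := (hx _ ⟨i, rfl⟩).trans (hy _ ⟨i, rfl⟩).symm
  simpa [hc, hxy] using this

theorem WithLp.fst_surjective_on_orthogonal_span [Fintype ι] :
    Function.Surjective fun x : (span 𝕜 (Set.range f))ᗮ => (x : WithLp 2 (H × E)).fst := by
  intro h
  obtain ⟨y, hy⟩ := c.exists_forall_inner_eq fun i => -⟪(f i).fst, h⟫_𝕜
  refine ⟨⟨WithLp.toLp 2 (h, y), ?_⟩, rfl⟩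
  rw [mem_orthogonal_span_iff]
  rintro _ ⟨i, rfl⟩
  simp [hc, hy]

noncomputable def WithLp.fstOrthogonalSpanEquiv [Fintype ι] [CompleteSpace H] :
    (span 𝕜 (Set.range f))ᗮ ≃L[𝕜] H :=
  have : FiniteDimensional 𝕜 E := .of_basis c
  have : CompleteSpace E := FiniteDimensional.complete 𝕜 E
  .ofBijective ((fstL 2 𝕜 H E).comp (subtypeL _))
    (LinearMap.ker_eq_bot.mpr (fst_injective_on_orthogonal_span f c hc))
    (LinearMap.range_eq_top.mpr (fst_surjective_on_orthogonal_span f c hc))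

@[simp]
theorem WithLp.fstOrthogonalSpanEquiv_apply [Fintype ι] [CompleteSpace H]
    (x : (span 𝕜 (Set.range f))ᗮ) :
    fstOrthogonalSpanEquiv f c hc x = (x : WithLp 2 (H × E)).fst :=
  rfl

end Projection

theorem stmt_6_general
    {H : Type*} [NormedAddCommGroup H] [InnerProductSpace ℂ H] [CompleteSpace H]
    [TopologicalSpace.SeparableSpace H] (hH : ¬ FiniteDimensional ℂ H)
    {E : Type*} [NormedAddCommGroup E] [InnerProductSpace ℂ E] [FiniteDimensional ℂ E]
    (N : ℕ) (hE : Module.finrank ℂ E = N)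
    (ψ : ℕ → H) (φ : ℕ → E)
    (hON : Orthonormal ℂ (fun n : ℕ => (WithLp.equiv 2 (H × E)).symm (ψ n, φ n)))
    (hTotal : (Submodule.span ℂ
        (Set.range (fun n : ℕ => (WithLp.equiv 2 (H × E)).symm (ψ n, φ n)))).topologicalClosure
      = ⊤)
    (Θ : Finset ℕ) (hΘ : Θ.card = N)
    (hLI : LinearIndependent ℂ (fun n : Θ => φ n)) :
    ∃ (u : HilbertBasis {n : ℕ // n ∉ Θ} ℂ H) (S : H ≃L[ℂ] H),
      ∀ n : {n : ℕ // n ∉ Θ}, S (u n) = ψ n := by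
  obtain ⟨b, hb⟩ : ∃ b : HilbertBasis ℕ ℂ (WithLp 2 (H × E)),
      ⇑b = fun n => (WithLp.equiv 2 (H × E)).symm (ψ n, φ n) :=
    ⟨.mk hON hTotal.ge, HilbertBasis.coe_mk hON _⟩
  -- Indexing by `(Θ : Set ℕ)` (definitionally the same subtypes as for the finset `Θ`) makes the
  -- domain of the projection syntactically that of `v`.
  let c : Basis (Θ : Set ℕ) ℂ E :=
    basisOfLinearIndependentOfCardEqFinrank' (fun n : (Θ : Set ℕ) => φ n) hLI (by simp [hΘ, hE])
  have hc : ∀ n : (Θ : Set ℕ), (b n).snd = c n := by simp [hb, c]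
  let v := b.orthogonalSpanRestrict (Θ : Set ℕ)
  have : Infinite {n : ℕ // n ∉ (Θ : Set ℕ)} := Θ.finite_toSet.infinite_compl.to_subtype
  obtain ⟨u⟩ := exists_hilbertBasis_of_countable_of_infinite hH {n : ℕ // n ∉ (Θ : Set ℕ)}
  let S := (u.repr.trans v.repr.symm).toContinuousLinearEquiv.trans
    (WithLp.fstOrthogonalSpanEquiv _ c hc)
  have hS : ∀ n : {n : ℕ // n ∉ (Θ : Set ℕ)}, S (u n) = ψ n := fun n => by
    simp only [S, ContinuousLinearEquiv.trans_apply, LinearIsometryEquiv.coe_toContinuousLinearEquiv,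
      u.repr_trans_repr_symm_apply, WithLp.fstOrthogonalSpanEquiv_apply, v,
      b.coe_orthogonalSpanRestrict_apply, hb]
    rfl
  exact ⟨u, S, hS⟩

/-- the 'if' direction of the main theorem: if `(φ n)_{n ∈ Θ}` is linearly
independent in `E`, then `(ψ n)_{n ∉ Θ}` is a Riesz basis for `H`, i.e. the image of an
orthonormal basis of `H` under a continuous linear equivalence of `H`. -/
theorem stmt_6
    {H : Type*} [NormedAddCommGroup H] [InnerProductSpace ℂ H] [CompleteSpace H]
    [TopologicalSpace.SeparableSpace H] (hH : ¬ FiniteDimensional ℂ H)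
    {E : Type*} [NormedAddCommGroup E] [InnerProductSpace ℂ E] [FiniteDimensional ℂ E]
    (N : ℕ) (hN : 1 ≤ N) (hE : Module.finrank ℂ E = N)
    (ψ : ℕ → H) (φ : ℕ → E)
    (hON : Orthonormal ℂ (fun n : ℕ => (WithLp.equiv 2 (H × E)).symm (ψ n, φ n)))
    (hTotal : (Submodule.span ℂ
        (Set.range (fun n : ℕ => (WithLp.equiv 2 (H × E)).symm (ψ n, φ n)))).topologicalClosure
      = ⊤)
    (Θ : Finset ℕ) (hΘ : Θ.card = N)
    (hLI : LinearIndependent ℂ (fun n : Θ => φ n)) :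
    ∃ (u : HilbertBasis {n : ℕ // n ∉ Θ} ℂ H) (S : H ≃L[ℂ] H),
      ∀ n : {n : ℕ // n ∉ Θ}, S (u n) = ψ n :=
  stmt_6_general hH N hE ψ φ hON hTotal Θ hΘ hLI
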